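/- Let P₀, P₁, P₂ ∈ ℝⁿ, let f̄ : ℝ → ℝⁿ be the extended two-segment function, let φ be a mollifier and ε > 0, and let F_ε := f̄ ⋆ φ_ε componentwise. Write P̃₁ := P₁ − P₀ and P̃₂ := P₂ − P₁, and A₁(t) := ∫_{(−∞,1]} φ_ε(t−s) ds, A₂(t) := ∫_{[1,∞)} φ_ε(t−s) ds. Then for every t ∈ ℝ one has A₁(t) ≥ 0, A₂(t) ≥ 0 and A₁(t) + A₂(t) = 1; consequently the derivative F_ε′(t) = A₁(t)·P̃₁ + A₂(t)·P̃₂ lies on the segment joining P̃₁ and P̃₂, and in particular ‖F_ε′(t)‖ ≥ inf_{s ∈ [0,1]} ‖s·P̃₁ + (1−s)·P̃₂‖. -/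

import Mathlib

open MeasureTheory

/-- A mollifier: smooth, supported in `[-1,1]`, nonnegative, integral one. -/
structure IsMollifier (φ : ℝ → ℝ) : Prop where
  smooth : ContDiff ℝ (⊤ : ℕ∞) φ
  supp : Function.support φ ⊆ Set.Icc (-1 : ℝ) 1
  nonneg : ∀ x, 0 ≤ φ x
  integral_one : ∫ x, φ x = 1

/-- Componentwise mollification of a vector-valued path:
`F_ε(t) = ∫ f(t - s) φ_ε(s) ds` with `φ_ε s = (1/ε) φ(s/ε)`. -/
noncomputable def mollifyV {n : ℕ} (φ : ℝ → ℝ) (ε : ℝ)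
    (f : ℝ → EuclideanSpace ℝ (Fin n)) (t : ℝ) : EuclideanSpace ℝ (Fin n) :=
  ∫ s, ((1 / ε) * φ (s / ε)) • f (t - s)
/-- Extended two-segment function through `P₀, P₁, P₂`. -/
noncomputable def twoSeg {n : ℕ} (P0 P1 P2 : EuclideanSpace ℝ (Fin n)) (t : ℝ) :
    EuclideanSpace ℝ (Fin n) :=
  if t ≤ 1 then P0 + t • (P1 - P0) else P1 + (t - 1) • (P2 - P1)

/-- `A₁(t) = ∫_{(-∞,1]} φ_ε(t-s) ds`. -/
noncomputable def A1 (φ : ℝ → ℝ) (ε t : ℝ) : ℝ :=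
  ∫ s in Set.Iic (1 : ℝ), (1 / ε) * φ ((t - s) / ε)

/-- `A₂(t) = ∫_{[1,∞)} φ_ε(t-s) ds`. -/
noncomputable def A2 (φ : ℝ → ℝ) (ε t : ℝ) : ℝ :=
  ∫ s in Set.Ici (1 : ℝ), (1 / ε) * φ ((t - s) / ε)

lemma twoSeg_eq {n : ℕ} (P0 P1 P2 : EuclideanSpace ℝ (Fin n)) (t : ℝ) :
    twoSeg P0 P1 P2 t
      = P0 + (min t 1) • (P1 - P0) + (max (t - 1) 0) • (P2 - P1) := by
  unfold twoSeg
  split_ifs with h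
  · rw [min_eq_left h, max_eq_right (by linarith), zero_smul, add_zero]
  · push_neg at h
    rw [min_eq_right h.le, max_eq_left (by linarith), one_smul]
    abel

lemma twoSeg_continuous {n : ℕ} (P0 P1 P2 : EuclideanSpace ℝ (Fin n)) :
    Continuous (twoSeg P0 P1 P2) := by
  have : twoSeg P0 P1 P2 =
      fun t => P0 + (min t 1) • (P1 - P0) + (max (t - 1) 0) • (P2 - P1) := by
    funext t; exact twoSeg_eq P0 P1 P2 t
  rw [this]
  fun_prop

lemma twoSeg_lip {n : ℕ} (P0 P1 P2 : EuclideanSpace ℝ (Fin n)) :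
    LipschitzWith (‖P1 - P0‖₊ + ‖P2 - P1‖₊) (twoSeg P0 P1 P2) := by
  apply LipschitzWith.of_dist_le_mul
  intro a b
  rw [dist_eq_norm, twoSeg_eq, twoSeg_eq]
  have h1 : |min a 1 - min b 1| ≤ |a - b| := by
    simpa using abs_min_sub_min_le_max a 1 b 1
  have h2 : |max (a - 1) 0 - max (b - 1) 0| ≤ |a - b| := by
    have := abs_max_sub_max_le_max (a - 1) 0 (b - 1) 0
    simpa [sub_sub_sub_cancel_right] using this
  have e : (P0 + (min a 1) • (P1 - P0) + (max (a - 1) 0) • (P2 - P1))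
      - (P0 + (min b 1) • (P1 - P0) + (max (b - 1) 0) • (P2 - P1))
      = (min a 1 - min b 1) • (P1 - P0)
        + (max (a - 1) 0 - max (b - 1) 0) • (P2 - P1) := by
    simp only [sub_smul]; abel
  rw [e]
  calc ‖(min a 1 - min b 1) • (P1 - P0)
        + (max (a - 1) 0 - max (b - 1) 0) • (P2 - P1)‖
      ≤ ‖(min a 1 - min b 1) • (P1 - P0)‖
        + ‖(max (a - 1) 0 - max (b - 1) 0) • (P2 - P1)‖ := norm_add_le _ _
    _ = |min a 1 - min b 1| * ‖P1 - P0‖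
        + |max (a - 1) 0 - max (b - 1) 0| * ‖P2 - P1‖ := by
        rw [norm_smul, norm_smul, Real.norm_eq_abs, Real.norm_eq_abs]
    _ ≤ |a - b| * ‖P1 - P0‖ + |a - b| * ‖P2 - P1‖ := by
        gcongr
        all_goals first | exact h1 | exact h2
    _ = (‖P1 - P0‖ + ‖P2 - P1‖) * |a - b| := by ring
    _ = ((‖P1 - P0‖₊ + ‖P2 - P1‖₊ : NNReal) : ℝ) * dist a b := by
        rw [Real.dist_eq]; push_cast [coe_nnnorm]; ring

theorem deriv_mollify_twoSeg_mem_segment {n : ℕ}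
    (P0 P1 P2 : EuclideanSpace ℝ (Fin n))
    (φ : ℝ → ℝ) (hφ : IsMollifier φ) (ε : ℝ) (hε : 0 < ε) :
    (∀ t : ℝ, 0 ≤ A1 φ ε t) ∧ (∀ t : ℝ, 0 ≤ A2 φ ε t) ∧
    (∀ t : ℝ, A1 φ ε t + A2 φ ε t = 1) ∧
    (∀ t : ℝ, deriv (mollifyV φ ε (twoSeg P0 P1 P2)) t =
        A1 φ ε t • (P1 - P0) + A2 φ ε t • (P2 - P1)) ∧
    (∀ t : ℝ, deriv (mollifyV φ ε (twoSeg P0 P1 P2)) t ∈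
        segment ℝ (P1 - P0) (P2 - P1)) ∧
    (∀ t : ℝ,
      sInf ((fun s : ℝ => ‖s • (P1 - P0) + (1 - s) • (P2 - P1)‖) '' Set.Icc 0 1) ≤
        ‖deriv (mollifyV φ ε (twoSeg P0 P1 P2)) t‖) := by
  set Q1 := P1 - P0 with hQ1
  set Q2 := P2 - P1 with hQ2
  set g : ℝ → ℝ := fun s => (1 / ε) * φ (s / ε) with hg
  have hgc : Continuous g := by
    apply continuous_const.mul
    exact hφ.smooth.continuous.comp (continuous_id.div_const ε)
  have hgnn : ∀ s, 0 ≤ g s := fun s =>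
    mul_nonneg (by positivity) (hφ.nonneg _)
  have hgsupp : ∀ x, x ∉ Set.Icc (-ε) ε → g x = 0 := by
    intro x hx
    have hx' : x / ε ∉ Set.Icc (-1 : ℝ) 1 := by
      intro h
      apply hx
      rcases h with ⟨h1, h2⟩
      constructor
      · have := mul_le_mul_of_nonneg_left h1 hε.le
        rw [mul_div_cancel₀ _ hε.ne'] at this
        linarith [this]
      · have := mul_le_mul_of_nonneg_left h2 hε.le
        rw [mul_div_cancel₀ _ hε.ne'] at this
        linarith [this]
    have : φ (x / ε) = 0 := by
      by_contra h
      exact hx' (hφ.supp (Function.mem_support.mpr h))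
    simp [hg, this]
  have hgcs : HasCompactSupport g :=
    HasCompactSupport.intro isCompact_Icc hgsupp
  have hgint : Integrable g := hgc.integrable_of_hasCompactSupport hgcs
  have hgone : (∫ s, g s) = 1 := by
    rw [hg]
    simp only [integral_const_mul]
    rw [MeasureTheory.Measure.integral_comp_div φ ε, hφ.integral_one,
      abs_of_pos hε, smul_eq_mul, mul_one]
    field_simp
  -- rewrite A1, A2 as set integrals of g
  have hA1 : ∀ t, A1 φ ε t = ∫ s in Set.Ici (t - 1), g s := by
    intro t
    have h1 : A1 φ ε t = ∫ s, Set.indicator (Set.Ici (t - 1)) g (t - s) := by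
      rw [A1, ← integral_indicator measurableSet_Iic]
      congr 1
      funext s
      by_cases hs : s ≤ 1
      · rw [Set.indicator_of_mem (Set.mem_Iic.mpr hs),
          Set.indicator_of_mem (Set.mem_Ici.mpr (by linarith))]
      · rw [Set.indicator_of_notMem (by simpa using hs),
          Set.indicator_of_notMem (by simp [Set.mem_Ici]; linarith)]
    rw [h1, integral_sub_left_eq_self _ volume t,
      integral_indicator measurableSet_Ici]
  have hA2 : ∀ t, A2 φ ε t = ∫ s in Set.Iic (t - 1), g s := by
    intro t
    have h1 : A2 φ ε t = ∫ s, Set.indicator (Set.Iic (t - 1)) g (t - s) := by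
      rw [A2, ← integral_indicator measurableSet_Ici]
      congr 1
      funext s
      by_cases hs : 1 ≤ s
      · rw [Set.indicator_of_mem (Set.mem_Ici.mpr hs),
          Set.indicator_of_mem (Set.mem_Iic.mpr (by linarith))]
      · rw [Set.indicator_of_notMem (by simpa using hs),
          Set.indicator_of_notMem (by simp [Set.mem_Iic]; linarith)]
    rw [h1, integral_sub_left_eq_self _ volume t,
      integral_indicator measurableSet_Iic]
  have hA1nn : ∀ t, 0 ≤ A1 φ ε t := by
    intro t
    rw [hA1]
    exact setIntegral_nonneg measurableSet_Ici fun s _ => hgnn s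
  have hA2nn : ∀ t, 0 ≤ A2 φ ε t := by
    intro t
    rw [hA2]
    exact setIntegral_nonneg measurableSet_Iic fun s _ => hgnn s
  have hsum : ∀ t, A1 φ ε t + A2 φ ε t = 1 := by
    intro t
    rw [hA1, hA2, integral_Ici_eq_integral_Ioi, add_comm,
      intervalIntegral.integral_Iic_add_Ioi hgint.integrableOn hgint.integrableOn, hgone]
  -- Lipschitz constant for twoSeg
  set Lnn : NNReal := ‖Q1‖₊ + ‖Q2‖₊ with hLnn
  set L : ℝ := ‖Q1‖ + ‖Q2‖ with hL
  have hLcoe : (Lnn : ℝ) = L := by push_cast [coe_nnnorm]; rfl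
  have hLnonneg : 0 ≤ L := by positivity
  have hflip := twoSeg_lip P0 P1 P2
  have hfc := twoSeg_continuous P0 P1 P2
  -- the key derivative computation
  have key : ∀ t₀ : ℝ, HasDerivAt (mollifyV φ ε (twoSeg P0 P1 P2))
      (A1 φ ε t₀ • Q1 + A2 φ ε t₀ • Q2) t₀ := by
    intro t₀
    set F' : ℝ → EuclideanSpace ℝ (Fin n) := fun s =>
      (Set.indicator (Set.Ioi (t₀ - 1)) g s) • Q1
        + (Set.indicator (Set.Iic (t₀ - 1)) g s) • Q2 with hF'
    have cont : ∀ x : ℝ, Continuous fun s => g s • twoSeg P0 P1 P2 (x - s) :=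
      fun x => hgc.smul (hfc.comp (continuous_const.sub continuous_id))
    have hmain := hasDerivAt_integral_of_dominated_loc_of_lip
      (F := fun x s => g s • twoSeg P0 P1 P2 (x - s)) (F' := F')
      (x₀ := t₀) (bound := fun s => g s * L) (s := Metric.ball t₀ 1) (Metric.ball_mem_nhds t₀ one_pos)
      (Filter.Eventually.of_forall fun x => (cont x).aestronglyMeasurable)
      (by
        apply (cont t₀).integrable_of_hasCompactSupport
        apply HasCompactSupport.intro (isCompact_Icc (a := -ε) (b := ε))
        intro x hx
        rw [hgsupp x hx, zero_smul])
      (by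
        apply AEStronglyMeasurable.add <;>
          exact ((hgc.aestronglyMeasurable.indicator (by measurability)).smul
            aestronglyMeasurable_const))
      (by
        apply Filter.Eventually.of_forall
        intro s
        apply LipschitzWith.lipschitzOnWith
        apply LipschitzWith.of_dist_le_mul
        intro x y
        have : dist (g s • twoSeg P0 P1 P2 (x - s)) (g s • twoSeg P0 P1 P2 (y - s))
            = |g s| * dist (twoSeg P0 P1 P2 (x - s)) (twoSeg P0 P1 P2 (y - s)) := by
          rw [dist_smul₀, Real.norm_eq_abs]
        rw [this]
        calc |g s| * dist (twoSeg P0 P1 P2 (x - s)) (twoSeg P0 P1 P2 (y - s))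
            ≤ |g s| * ((Lnn : ℝ) * dist (x - s) (y - s)) := by
              gcongr; exact hflip.dist_le_mul _ _
          _ = (Real.nnabs (g s * L) : ℝ) * dist x y := by
              rw [dist_sub_right, Real.coe_nnabs,
                abs_of_nonneg (mul_nonneg (hgnn s) hLnonneg),
                abs_of_nonneg (hgnn s), hLcoe]; ring)
      (hgint.mul_const L)
      (by
        have hns : (volume : Measure ℝ) {t₀ - 1} = 0 := measure_singleton _
        filter_upwards [compl_mem_ae_iff.mpr hns] with s hs
        have hsne : s ≠ t₀ - 1 := by simpa [Set.mem_singleton_iff] using hs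
        rcases lt_or_gt_of_ne hsne with hlt | hgt
        · -- s < t₀ - 1 : here x - s > 1 near t₀, slope Q2
          have hF'eq : F' s = g s • Q2 := by
            simp only [hF']
            rw [Set.indicator_of_notMem (by simp [Set.mem_Ioi]; linarith),
              Set.indicator_of_mem (Set.mem_Iic.mpr hlt.le), zero_smul, zero_add]
          rw [hF'eq]
          have base : HasDerivAt (fun x : ℝ => g s • (P1 + (x - s - 1) • Q2))
              (g s • Q2) t₀ := by
            have h1 : HasDerivAt (fun x : ℝ => x - s - 1) 1 t₀ :=
              ((hasDerivAt_id t₀).sub_const s).sub_const 1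
            have h2 := (h1.smul_const Q2).const_add P1
            have h3 := h2.const_smul (g s)
            simp only [one_smul] at h3
            exact h3
          apply base.congr_of_eventuallyEq
          have hmem : Set.Ioi (s + 1) ∈ nhds t₀ := Ioi_mem_nhds (by linarith)
          filter_upwards [hmem] with x hx
          have : ¬ (x - s ≤ 1) := by simp [Set.mem_Ioi] at hx; linarith
          simp only [twoSeg, if_neg this]; rfl
        · -- s > t₀ - 1 : here x - s < 1 near t₀, slope Q1
          have hF'eq : F' s = g s • Q1 := by
            simp only [hF']
            rw [Set.indicator_of_mem (Set.mem_Ioi.mpr hgt),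
              Set.indicator_of_notMem (by simp [Set.mem_Iic]; linarith),
              zero_smul, add_zero]
          rw [hF'eq]
          have base : HasDerivAt (fun x : ℝ => g s • (P0 + (x - s) • Q1))
              (g s • Q1) t₀ := by
            have h1 : HasDerivAt (fun x : ℝ => x - s) 1 t₀ :=
              (hasDerivAt_id t₀).sub_const s
            have h2 := (h1.smul_const Q1).const_add P0
            have h3 := h2.const_smul (g s)
            simp only [one_smul] at h3
            exact h3
          apply base.congr_of_eventuallyEq
          have hmem : Set.Iio (s + 1) ∈ nhds t₀ := Iio_mem_nhds (by linarith)
          filter_upwards [hmem] with x hx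
          have : x - s ≤ 1 := by simp [Set.mem_Iio] at hx; linarith
          simp only [twoSeg, if_pos this]; rfl)
    obtain ⟨hF'int, hderiv⟩ := hmain
    have hcalc : (∫ s, F' s) = A1 φ ε t₀ • Q1 + A2 φ ε t₀ • Q2 := by
      simp only [hF']
      rw [integral_add ((hgint.indicator measurableSet_Ioi).smul_const Q1)
        ((hgint.indicator measurableSet_Iic).smul_const Q2),
        integral_smul_const, integral_smul_const,
        integral_indicator measurableSet_Ioi, integral_indicator measurableSet_Iic,
        ← integral_Ici_eq_integral_Ioi, ← hA1, ← hA2]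
    rw [hcalc] at hderiv
    exact hderiv
  have hderiv : ∀ t, deriv (mollifyV φ ε (twoSeg P0 P1 P2)) t
      = A1 φ ε t • Q1 + A2 φ ε t • Q2 := fun t => (key t).deriv
  refine ⟨hA1nn, hA2nn, hsum, hderiv, ?_, ?_⟩
  · intro t
    exact ⟨A1 φ ε t, A2 φ ε t, hA1nn t, hA2nn t, hsum t, (hderiv t).symm⟩
  · intro t
    apply csInf_le
    · exact ⟨0, by rintro x ⟨s, -, rfl⟩; exact norm_nonneg _⟩
    · refine ⟨A1 φ ε t, ⟨hA1nn t, by have := hsum t; have := hA2nn t; linarith⟩, ?_⟩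
      have h2 : (1 : ℝ) - A1 φ ε t = A2 φ ε t := by have := hsum t; linarith
      show ‖A1 φ ε t • (P1 - P0) + (1 - A1 φ ε t) • (P2 - P1)‖ = _
      rw [h2, hderiv t]
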